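/- Let ĥx_{k|k}[j] = A^{Δ_k[j]} z_{k − Δ_k[j]} + Σ_{t = k−Δ_k[j]}^{k−1} A^{k−1−t} B u_t, where z_m denotes the local Kalman estimate ĥx_{m|m}[1] satisfying z_m = A z_{m−1} + B u_{m−1} + ζ_m. Then the mismatch error between decision makers j and j+1 satisfies x̃_k[j] := ĥx_{k|k}[j] − ĥx_{k|k}[j+1] = Σ_{t = k − Δ_k[j] − ∇Δ_k[j]}^{k − Δ_k[j] − 1} A^{k−1−t} ζ_{t+1}, where ∇Δ_k[j] = Δ_k[j+1] − Δ_k[j]; in particular x̃_k[j] does not depend on the controls u. -/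
import Mathlib

open Matrix Finset

lemma mvsum {n : ℕ} (A : Matrix (Fin n) (Fin n) ℝ) {α : Type*} (s : Finset α)
    (f : α → Fin n → ℝ) : A.mulVec (∑ i ∈ s, f i) = ∑ i ∈ s, A.mulVec (f i) := by
  induction s using Finset.cons_induction with
  | empty => simp
  | cons i s hi ih => simp [Finset.sum_cons, Matrix.mulVec_add, ih]

lemma z_unroll {n p : ℕ} (A : Matrix (Fin n) (Fin n) ℝ) (B : Matrix (Fin n) (Fin p) ℝ)
    (u : ℕ → Fin p → ℝ) (ζ : ℕ → Fin n → ℝ) (z : ℕ → Fin n → ℝ)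
    (hz : ∀ m : ℕ, z (m + 1) = A.mulVec (z m) + B.mulVec (u m) + ζ (m + 1))
    (a : ℕ) : ∀ b : ℕ, a ≤ b →
    z b = (A ^ (b - a)).mulVec (z a)
      + ∑ t ∈ Finset.Ico a b, (A ^ (b - 1 - t)).mulVec (B.mulVec (u t) + ζ (t + 1)) := by
  intro b hb
  induction b, hb using Nat.le_induction with
  | base => simp
  | succ b hb ih =>
    have h3 : ∀ t ∈ Finset.Ico a b, (A ^ (b + 1 - 1 - t)).mulVec (B.mulVec (u t) + ζ (t + 1))
        = A.mulVec ((A ^ (b - 1 - t)).mulVec (B.mulVec (u t) + ζ (t + 1))) := by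
      intro t ht
      simp only [Finset.mem_Ico] at ht
      have he : b + 1 - 1 - t = (b - 1 - t) + 1 := by omega
      rw [he, pow_succ', ← Matrix.mulVec_mulVec]
    have h1 : b + 1 - a = (b - a) + 1 := by omega
    have h2 : b + 1 - 1 - b = 0 := by omega
    rw [hz b, ih, Finset.sum_Ico_succ_top (by omega), h1, h2, pow_succ',
      Matrix.mulVec_add, mvsum, ← Matrix.mulVec_mulVec, Finset.sum_congr rfl h3,
      pow_zero, Matrix.one_mulVec]
    abel

/-- The mismatch error between decision makers `j` and `j+1` is a sum of
propagated innovations over the relative-AoI window, and does not depend on the controls. -/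
theorem mismatch_error_innovation_sum
    (n p : ℕ) (A : Matrix (Fin n) (Fin n) ℝ) (B : Matrix (Fin n) (Fin p) ℝ)
    (u : ℕ → Fin p → ℝ) (ζ : ℕ → Fin n → ℝ)
    (z : ℕ → Fin n → ℝ)  -- local Kalman estimates ĥx_{m|m}[1]
    (hz : ∀ m : ℕ, z (m + 1) = A.mulVec (z m) + B.mulVec (u m) + ζ (m + 1))
    (k Δj Δj1 : ℕ)  -- `Δj = Δ_k[j]`, `Δj1 = Δ_k[j+1]`
    (hΔ : Δj ≤ Δj1) (hΔk : Δj1 ≤ k)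
    (xhatj xhatj1 : Fin n → ℝ)
    (hhatj : xhatj = (A ^ Δj).mulVec (z (k - Δj))
      + ∑ t ∈ Finset.Ico (k - Δj) k, (A ^ (k - 1 - t)).mulVec (B.mulVec (u t)))
    (hhatj1 : xhatj1 = (A ^ Δj1).mulVec (z (k - Δj1))
      + ∑ t ∈ Finset.Ico (k - Δj1) k, (A ^ (k - 1 - t)).mulVec (B.mulVec (u t))) :
    xhatj - xhatj1
      = ∑ t ∈ Finset.Ico (k - Δj1) (k - Δj), (A ^ (k - 1 - t)).mulVec (ζ (t + 1)) := by
  have hzz := z_unroll A B u ζ z hz (k - Δj1) (k - Δj) (by omega)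
  rw [hzz] at hhatj
  have hsplit : Finset.Ico (k - Δj1) k = Finset.Ico (k - Δj1) (k - Δj) ∪ Finset.Ico (k - Δj) k := by
    rw [Finset.Ico_union_Ico_eq_Ico (by omega) (by omega)]
  have hdisj : Disjoint (Finset.Ico (k - Δj1) (k - Δj)) (Finset.Ico (k - Δj) k) :=
    Finset.Ico_disjoint_Ico_consecutive _ _ _
  rw [hhatj, hhatj1, hsplit, Finset.sum_union hdisj]
  have hA : (A ^ Δj).mulVec ((A ^ (k - Δj - (k - Δj1))).mulVec (z (k - Δj1)))
      = (A ^ Δj1).mulVec (z (k - Δj1)) := by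
    rw [Matrix.mulVec_mulVec, ← pow_add]
    have : Δj + (k - Δj - (k - Δj1)) = Δj1 := by omega
    rw [this]
  have hsum : ∀ t ∈ Finset.Ico (k - Δj1) (k - Δj),
      (A ^ Δj).mulVec ((A ^ (k - Δj - 1 - t)).mulVec (B.mulVec (u t) + ζ (t + 1)))
      = (A ^ (k - 1 - t)).mulVec (B.mulVec (u t)) + (A ^ (k - 1 - t)).mulVec (ζ (t + 1)) := by
    intro t ht
    simp only [Finset.mem_Ico] at ht
    rw [Matrix.mulVec_mulVec, ← pow_add, ← Matrix.mulVec_add]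
    have : Δj + (k - Δj - 1 - t) = k - 1 - t := by omega
    rw [this]
  rw [Matrix.mulVec_add, mvsum, hA, Finset.sum_congr rfl hsum, Finset.sum_add_distrib]
  abel
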